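/- arXiv:2509.23458 — 3 statements merged into one kernel-verified Lean document; each statement's English description precedes it below -/
import Mathlib

section
/- There exists an absolute constant C > 0 such that for every integer n ≥ 2 there is a set H ⊆ {(i, j) ∈ ℕ × ℕ : 1 ≤ i < j ≤ n} of cardinality at most C·n·log n with the following property: for all 1 ≤ i < j ≤ n, either (i, j) ∈ H, or there exists q with i < q < j such that (i, q) ∈ H and (q, j) ∈ H. -/
/-!
`dyadicCenter ℓ x = 2^ℓ (2t + 1)` is the midpoint of the aligned dyadic block
`[2^(ℓ+1) t, 2^(ℓ+1) (t + 1))` containing `x`. Joining each `x ≤ n` to its centres at the levels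
with `2^ℓ ≤ n` gives at most `n (⌊log₂ n⌋ + 1)` edges. For `0 < i ≤ j`, a point `m ∈ [i, j]` of
maximal 2-adic valuation `ℓ` is an odd multiple of `2^ℓ`, and no multiple of `2^(ℓ+1)` lies in
`[i, j]`; so `[i, j]` sits inside the level-`ℓ` block centred at `m`, and `i → m → j` is a path of
at most two edges.
-/

open Finset

def dyadicCenter (ℓ x : ℕ) : ℕ := 2 ^ ℓ * (2 * (x / 2 ^ (ℓ + 1)) + 1)

lemma pow_le_dyadicCenter (ℓ x : ℕ) : 2 ^ ℓ ≤ dyadicCenter ℓ x :=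
  Nat.le_mul_of_pos_right _ (Nat.succ_pos _)

lemma dyadicCenter_pos (ℓ x : ℕ) : 0 < dyadicCenter ℓ x :=
  (Nat.two_pow_pos ℓ).trans_le (pow_le_dyadicCenter ℓ x)

lemma dyadicCenter_eq {ℓ t x : ℕ} (hlo : 2 ^ (ℓ + 1) * t ≤ x)
    (hhi : x < 2 ^ (ℓ + 1) * (t + 1)) :
    dyadicCenter ℓ x = 2 ^ ℓ * (2 * t + 1) := by
  rw [dyadicCenter, Nat.div_eq_of_lt_le (by rwa [mul_comm] at hlo) (by rwa [mul_comm] at hhi)]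

lemma exists_dyadicCenter_eq_mem_Icc {i j : ℕ} (hi : 0 < i) (hij : i ≤ j) :
    ∃ ℓ, dyadicCenter ℓ i = dyadicCenter ℓ j ∧
      i ≤ dyadicCenter ℓ i ∧ dyadicCenter ℓ i ≤ j := by
  obtain ⟨m, hm, hmax⟩ := (Icc i j).exists_max_image (padicValNat 2) ⟨i, by simp [hij]⟩
  obtain ⟨c, hc⟩ : 2 ^ padicValNat 2 m ∣ m := pow_padicValNat_dvd
  generalize padicValNat 2 m = ℓ at hmax hc
  have hno : ∀ y ∈ Icc i j, ¬ 2 ^ (ℓ + 1) ∣ y := fun y hy hdvd =>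
    (hmax y hy).not_gt <| (padicValNat_dvd_iff_le (hi.trans_le (mem_Icc.mp hy).1).ne').mp hdvd
  obtain ⟨t, rfl⟩ : Odd c := by
    rw [← Nat.not_even_iff_odd]
    rintro ⟨d, rfl⟩
    exact hno m hm ⟨d, by rw [hc, pow_succ]; ring⟩
  have hm_lo : m = 2 ^ (ℓ + 1) * t + 2 ^ ℓ := by rw [hc, pow_succ]; ring
  have hm_hi : 2 ^ (ℓ + 1) * (t + 1) = m + 2 ^ ℓ := by rw [hm_lo, pow_succ]; ring
  obtain ⟨him, hmj⟩ := mem_Icc.mp hm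
  have hlo : 2 ^ (ℓ + 1) * t < i := not_le.mp fun h =>
    hno _ (mem_Icc.mpr ⟨h, (Nat.le_add_right _ _).trans (hm_lo ▸ hmj)⟩) (dvd_mul_right _ _)
  have hhi : j < 2 ^ (ℓ + 1) * (t + 1) := not_le.mp fun h =>
    hno _ (mem_Icc.mpr ⟨him.trans (hm_hi ▸ Nat.le_add_right _ _), h⟩) (dvd_mul_right _ _)
  have hcenter : ∀ x ∈ Icc i j, dyadicCenter ℓ x = m := fun x hx => by
    rw [mem_Icc] at hx
    rw [dyadicCenter_eq (t := t) (by omega) (by omega), hc]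
  have hci := hcenter i (left_mem_Icc.mpr hij)
  exact ⟨ℓ, hci.trans (hcenter j (right_mem_Icc.mpr hij)).symm, hci ▸ him, hci ▸ hmj⟩

def dyadicSpanner (n : ℕ) : Finset (ℕ × ℕ) :=
  ((Icc 1 n ×ˢ range (Nat.log 2 n + 1)).image fun p =>
      (min p.1 (dyadicCenter p.2 p.1), max p.1 (dyadicCenter p.2 p.1))).filter
    fun e => 1 ≤ e.1 ∧ e.1 < e.2 ∧ e.2 ≤ n

lemma dyadicSpanner_edge {n : ℕ} {e : ℕ × ℕ} (he : e ∈ dyadicSpanner n) :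
    1 ≤ e.1 ∧ e.1 < e.2 ∧ e.2 ≤ n :=
  (mem_filter.mp he).2

lemma card_dyadicSpanner_le (n : ℕ) : #(dyadicSpanner n) ≤ n * (Nat.log 2 n + 1) :=
  calc #(dyadicSpanner n) ≤ #(Icc 1 n ×ˢ range (Nat.log 2 n + 1)) :=
        (card_filter_le _ _).trans card_image_le
    _ = n * (Nat.log 2 n + 1) := by simp

lemma min_max_mem_dyadicSpanner {n ℓ x : ℕ} (hx : 1 ≤ x) (hxn : x ≤ n)
    (hcn : dyadicCenter ℓ x ≤ n) (hne : x ≠ dyadicCenter ℓ x) :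
    (min x (dyadicCenter ℓ x), max x (dyadicCenter ℓ x)) ∈ dyadicSpanner n := by
  have hℓ : ℓ ≤ Nat.log 2 n :=
    Nat.le_log_of_pow_le (by norm_num) ((pow_le_dyadicCenter ℓ x).trans hcn)
  refine mem_filter.mpr ⟨mem_image.mpr ⟨(x, ℓ), ?_, rfl⟩, le_min hx (dyadicCenter_pos ℓ x),
    min_lt_max.mpr hne, max_le hxn hcn⟩
  simp [hx, hxn, hℓ]

lemma mem_dyadicSpanner_of_lt_dyadicCenter {n ℓ x : ℕ} (hx : 1 ≤ x)
    (hlt : x < dyadicCenter ℓ x) (hcn : dyadicCenter ℓ x ≤ n) :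
    (x, dyadicCenter ℓ x) ∈ dyadicSpanner n := by
  simpa [min_eq_left hlt.le, max_eq_right hlt.le] using
    min_max_mem_dyadicSpanner hx (hlt.le.trans hcn) hcn hlt.ne

lemma mem_dyadicSpanner_of_dyadicCenter_lt {n ℓ x : ℕ} (hlt : dyadicCenter ℓ x < x)
    (hxn : x ≤ n) : (dyadicCenter ℓ x, x) ∈ dyadicSpanner n := by
  simpa [min_eq_right hlt.le, max_eq_left hlt.le] using
    min_max_mem_dyadicSpanner ((dyadicCenter_pos ℓ x).trans hlt) hxn (hlt.le.trans hxn) hlt.ne'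

lemma dyadicSpanner_two_hop {n i j : ℕ} (hi : 1 ≤ i) (hij : i < j) (hjn : j ≤ n) :
    (i, j) ∈ dyadicSpanner n ∨
      ∃ q, i < q ∧ q < j ∧ (i, q) ∈ dyadicSpanner n ∧ (q, j) ∈ dyadicSpanner n := by
  obtain ⟨ℓ, hij_eq, him, hmj⟩ := exists_dyadicCenter_eq_mem_Icc hi hij.le
  rcases him.eq_or_lt with him | him
  · left
    rw [him, hij_eq]
    exact mem_dyadicSpanner_of_dyadicCenter_lt (by omega) hjn
  rcases hmj.eq_or_lt with hmj | hmj
  · left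
    rw [← hmj]
    exact mem_dyadicSpanner_of_lt_dyadicCenter hi him (by omega)
  right
  refine ⟨dyadicCenter ℓ i, him, hmj,
    mem_dyadicSpanner_of_lt_dyadicCenter hi him (by omega), ?_⟩
  rw [hij_eq] at hmj ⊢
  exact mem_dyadicSpanner_of_dyadicCenter_lt hmj hjn

lemma natLog_add_one_le_two_mul_logb {b n : ℕ} (hb : 1 < b) (hbn : b ≤ n) :
    (Nat.log b n + 1 : ℝ) ≤ 2 * Real.logb b n := by
  have hpos : (1 : ℝ) ≤ Nat.log b n := by exact_mod_cast Nat.log_pos hb hbn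
  linarith [Real.natLog_le_logb n b]

/-- there is an absolute constant `C > 0` such that for every `n ≥ 2` the path
`1 < 2 < … < n` admits a 2-hop spanner `H` with at most `C·n·log n` edges: for all
`1 ≤ i < j ≤ n`, either `(i,j) ∈ H` or there is `q` with `i < q < j`, `(i,q) ∈ H` and
`(q,j) ∈ H`. -/
theorem two_hop_spanner_exists :
    ∃ C : ℝ, 0 < C ∧
      ∀ n : ℕ, 2 ≤ n →
        ∃ H : Finset (ℕ × ℕ),
          (∀ p ∈ H, 1 ≤ p.1 ∧ p.1 < p.2 ∧ p.2 ≤ n) ∧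
          (H.card : ℝ) ≤ C * n * Real.logb 2 n ∧
          ∀ i j : ℕ, 1 ≤ i → i < j → j ≤ n →
            ((i, j) ∈ H ∨ ∃ q, i < q ∧ q < j ∧ (i, q) ∈ H ∧ (q, j) ∈ H) := by
  refine ⟨2, two_pos, fun n hn => ⟨dyadicSpanner n, fun _ => dyadicSpanner_edge, ?_,
    fun _ _ => dyadicSpanner_two_hop⟩⟩
  calc (#(dyadicSpanner n) : ℝ) ≤ n * (Nat.log 2 n + 1) := by
        exact_mod_cast card_dyadicSpanner_le n
    _ ≤ n * (2 * Real.logb 2 n) := by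
        gcongr
        exact_mod_cast natLog_add_one_le_two_mul_logb one_lt_two hn
    _ = 2 * n * Real.logb 2 n := by ring
end

section
/- Let G = (V, E, w) be a weighted digraph with m = |E| edges, let r ≥ 0 be a real number, and let u, v ∈ V. For a set B ⊆ V write ‖B‖ for the number of edges of G with both endpoints in B, and let B⁺(u, r) = {y ∈ V : d_G(u, y) ≤ r} and B⁻(v, r) = {y ∈ V : d_G(y, v) ≤ r}. If ‖B⁺(u, r)‖ > m/2 and ‖B⁻(v, r)‖ > m/2, then d_G(u, v) ≤ 2r. -/
open scoped ENNReal BigOperators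

/-- A weighted digraph: edges `E` with no self-loops and positive real weights. -/
structure WDigraph (V : Type) where
  E : V → V → Prop
  no_self : ∀ v : V, ¬ E v v
  w : V → V → ℝ
  w_pos : ∀ u v : V, E u v → 0 < w u v

namespace WDigraph

variable {V : Type}

/-- `PathW G u v c`: there is a directed path from `u` to `v` in `G` of total weight `c`. -/
inductive PathW (G : WDigraph V) : V → V → ℝ → Prop
  | nil (u : V) : PathW G u u 0
  | cons {u x v : V} {c : ℝ} : G.E u x → PathW G x v c → PathW G u v (G.w u x + c)

/-- `u ⇝_G v`: there is a directed path from `u` to `v`. -/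
def Reach (G : WDigraph V) (u v : V) : Prop := Relation.ReflTransGen G.E u v

/-- The shortest-path quasimetric: infimum of path weights, `∞` if no path exists. -/
noncomputable def dist (G : WDigraph V) (u v : V) : ℝ≥0∞ :=
  ⨅ (c : ℝ) (_ : G.PathW u v c), ENNReal.ofReal c

/-- A DAG: no vertex has a nonempty directed path to itself. -/
def IsDAG (G : WDigraph V) : Prop := ∀ v : V, ¬ Relation.TransGen G.E v v

/-- Number of edges of the digraph. -/
noncomputable def edgeCount (G : WDigraph V) : ℕ := Nat.card {p : V × V // G.E p.1 p.2}

end WDigraph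

theorem Set.inter_nonempty_of_ncard_lt_ncard_add_ncard {α : Type*} {s t u : Set α}
    (hs : s.Finite) (hts : t ⊆ s) (hus : u ⊆ s) (hstu : s.ncard < t.ncard + u.ncard) :
    (t ∩ u).Nonempty := by
  by_contra hdisj
  rw [Set.not_nonempty_iff_eq_empty] at hdisj
  have hunion := Set.ncard_union_add_ncard_inter t u (hs.subset hts) (hs.subset hus)
  have hle := Set.ncard_le_ncard (Set.union_subset hts hus) hs
  rw [hdisj, Set.ncard_empty] at hunion
  omega

namespace WDigraph

variable {V : Type} {G : WDigraph V}

theorem PathW.append {u y v : V} {c₁ c₂ : ℝ} (h₁ : G.PathW u y c₁) (h₂ : G.PathW y v c₂) :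
    G.PathW u v (c₁ + c₂) := by
  induction h₁ with
  | nil => simpa using h₂
  | cons e _ ih => rw [add_assoc]; exact .cons e (ih h₂)

theorem dist_triangle (G : WDigraph V) (u y v : V) : G.dist u v ≤ G.dist u y + G.dist y v := by
  simp only [dist, ENNReal.iInf_add, ENNReal.add_iInf, le_iInf_iff]
  intro c₂ h₂ c₁ h₁
  calc G.dist u v ≤ ENNReal.ofReal (c₁ + c₂) := iInf₂_le _ (h₁.append h₂)
    _ ≤ ENNReal.ofReal c₁ + ENNReal.ofReal c₂ := ENNReal.ofReal_add_le

theorem exists_edge_of_half_lt_card [Finite V] {P Q : V × V → Prop}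
    (hP : (G.edgeCount : ℝ) / 2 < (Nat.card {p : V × V // G.E p.1 p.2 ∧ P p} : ℝ))
    (hQ : (G.edgeCount : ℝ) / 2 < (Nat.card {p : V × V // G.E p.1 p.2 ∧ Q p} : ℝ)) :
    ∃ p : V × V, G.E p.1 p.2 ∧ P p ∧ Q p := by
  have hlt : G.edgeCount < Nat.card {p : V × V // G.E p.1 p.2 ∧ P p} +
      Nat.card {p : V × V // G.E p.1 p.2 ∧ Q p} := by
    have : (G.edgeCount : ℝ) < Nat.card {p : V × V // G.E p.1 p.2 ∧ P p} +
        Nat.card {p : V × V // G.E p.1 p.2 ∧ Q p} := by linarith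
    exact_mod_cast this
  obtain ⟨p, ⟨hE, hp⟩, -, hq⟩ := Set.inter_nonempty_of_ncard_lt_ncard_add_ncard (Set.toFinite _)
    (fun _ h ↦ h.1) (fun _ h ↦ h.1) hlt
  exact ⟨p, hE, hp, hq⟩

end WDigraph

theorem heavy_balls_close_general {V : Type} [Fintype V] (G : WDigraph V) (r : ℝ)
    (u v : V)
    (hout : (G.edgeCount : ℝ) / 2 <
      (Nat.card {p : V × V // G.E p.1 p.2 ∧
        G.dist u p.1 ≤ ENNReal.ofReal r ∧ G.dist u p.2 ≤ ENNReal.ofReal r} : ℝ))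
    (hin : (G.edgeCount : ℝ) / 2 <
      (Nat.card {p : V × V // G.E p.1 p.2 ∧
        G.dist p.1 v ≤ ENNReal.ofReal r ∧ G.dist p.2 v ≤ ENNReal.ofReal r} : ℝ)) :
    G.dist u v ≤ ENNReal.ofReal (2 * r) := by
  obtain ⟨p, -, ⟨hup, -⟩, hpv, -⟩ := G.exists_edge_of_half_lt_card hout hin
  calc G.dist u v ≤ G.dist u p.1 + G.dist p.1 v := G.dist_triangle u p.1 v
    _ ≤ ENNReal.ofReal r + ENNReal.ofReal r := add_le_add hup hpv
    _ = ENNReal.ofReal (2 * r) := by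
      rw [ENNReal.ofReal_mul zero_le_two, ENNReal.ofReal_ofNat, two_mul]

/-- if the out-ball `B⁺(u,r)` and the in-ball `B⁻(v,r)` each contain more
than half of the edges of `G` (edges with both endpoints in the ball), then
`d_G(u,v) ≤ 2r`. -/
theorem heavy_balls_close {V : Type} [Fintype V] (G : WDigraph V) (r : ℝ) (hr : 0 ≤ r)
    (u v : V)
    (hout : (G.edgeCount : ℝ) / 2 <
      (Nat.card {p : V × V // G.E p.1 p.2 ∧
        G.dist u p.1 ≤ ENNReal.ofReal r ∧ G.dist u p.2 ≤ ENNReal.ofReal r} : ℝ))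
    (hin : (G.edgeCount : ℝ) / 2 <
      (Nat.card {p : V × V // G.E p.1 p.2 ∧
        G.dist p.1 v ≤ ENNReal.ofReal r ∧ G.dist p.2 v ≤ ENNReal.ofReal r} : ℝ)) :
    G.dist u v ≤ ENNReal.ofReal (2 * r) :=
  heavy_balls_close_general G r u v hout hin
end

section
/- Let n ≥ 2 and let C_n be the directed cycle on vertices v₁, …, v_n with edge set {(v₁, v₂), (v₂, v₃), …, (v_{n−1}, v_n), (v_n, v₁)}. (i) For every subgraph D of C_n (same vertices, a subset of the edges) that contains no directed cycle, there is at most one index i ∈ {1, …, n} such that v_{i+1} ⇝_D v_i (indices taken modulo n). (ii) Consequently, if D₁, …, D_g are subgraphs of C_n, each containing no directed cycle, such that for every ordered pair (u, v) with u ⇝_{C_n} v there is some j with u ⇝_{D_j} v, then g ≥ n. -/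
/-!
Measure every vertex `v` of the cycle by the number of steps `v - (u + 1)` it lies after
`u + 1`. If a subgraph `D` lacks the edge `u → u + 1`, every edge of `D` raises this
measure by exactly one, so it can only grow along paths of `D`. Now if `D` is acyclic and
`i' + 1 ⇝_D i'`, the edge `i' → i' + 1` is missing from `D`; a path `i + 1 ⇝_D i` with
`i ≠ i'` would then lower the measure by one. For the cover bound, every pair `(i + 1, i)` is
reachable in `C_n`, and a subgraph covering two such pairs would contradict (i), so choosing a
covering subgraph for each `i` is injective.
-/

open Relation

namespace Fin

open Fin.NatCast Fin.CommRing

variable {n : ℕ} [NeZero n]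

theorem val_add_one_eq_mod (a : Fin n) : (a + 1).val = (a.val + 1) % n := by
  rw [Fin.val_add, Fin.val_one', Nat.add_mod_mod]

theorem val_add_one_sub_of_ne {u v : Fin n} (h : v ≠ u) :
    (v + 1 - (u + 1)).val = (v - (u + 1)).val + 1 := by
  rw [show v + 1 - (u + 1) = v - (u + 1) + 1 by ring]
  refine val_add_one_of_lt' (lt_of_le_of_ne (v - (u + 1)).isLt fun hlast => h ?_)
  have hzero : v - (u + 1) + 1 = 0 := Fin.ext <| by
    rw [val_add_one_eq_mod, hlast, Nat.mod_self]
    rfl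
  linear_combination hzero

theorem reflTransGen_add_one (a b : Fin n) : ReflTransGen (fun x y => y = x + 1) a b := by
  have hiter (k : ℕ) : ReflTransGen (fun x y => y = x + 1) a (a + k) := by
    induction k with
    | zero => simpa using .refl
    | succ k ih => exact ih.tail (by push_cast; ring)
  simpa using hiter (b - a).val

variable {D : Fin n → Fin n → Prop}

theorem val_sub_add_one_le_of_reflTransGen (hD : ∀ a b, D a b → b = a + 1) {u : Fin n}
    (hu : ¬ D u (u + 1)) {a b : Fin n} (h : ReflTransGen D a b) :
    (a - (u + 1)).val ≤ (b - (u + 1)).val := by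
  induction h with
  | refl => exact le_rfl
  | @tail b c _ hbc ih =>
    obtain rfl := hD b c hbc
    have hbu : b ≠ u := by
      rintro rfl
      exact hu hbc
    rw [val_add_one_sub_of_ne hbu]
    omega

theorem eq_of_reflTransGen_add_one (hD : ∀ a b, D a b → b = a + 1)
    (hacyc : ∀ v, ¬ TransGen D v v) {i i' : Fin n}
    (h : ReflTransGen D (i + 1) i) (h' : ReflTransGen D (i' + 1) i') : i = i' := by
  by_contra hne
  have hcut : ¬ D i' (i' + 1) := fun hedge => hacyc i' (TransGen.head' hedge h')
  have hmono := val_sub_add_one_le_of_reflTransGen hD hcut h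
  rw [val_add_one_sub_of_ne hne] at hmono
  omega

theorem le_card_of_reflTransGen_cover {ι : Type*} [Fintype ι] {D : ι → Fin n → Fin n → Prop}
    (hD : ∀ j a b, D j a b → b = a + 1) (hacyc : ∀ j v, ¬ TransGen (D j) v v)
    (hcover : ∀ u v, ReflTransGen (fun a b => b = a + 1) u v → ∃ j, ReflTransGen (D j) u v) :
    n ≤ Fintype.card ι := by
  choose f hf using fun i : Fin n => hcover (i + 1) i (reflTransGen_add_one _ _)
  have hinj : f.Injective := fun i i' hii' =>
    eq_of_reflTransGen_add_one (hD _) (hacyc _) (hf i) (hii' ▸ hf i')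
  simpa using Fintype.card_le_of_injective f hinj

end Fin

theorem directed_cycle_dag_cover_lower_bound_general (n : ℕ)
    (succ : Fin n → Fin n)
    (hsucc : ∀ i : Fin n, (succ i : ℕ) = ((i : ℕ) + 1) % n) :
    (∀ D : Fin n → Fin n → Prop,
      (∀ u v : Fin n, D u v → v = succ u) →
      (∀ v : Fin n, ¬ Relation.TransGen D v v) →
      ∀ i i' : Fin n,
        Relation.ReflTransGen D (succ i) i → Relation.ReflTransGen D (succ i') i' →
        i = i') ∧
    (∀ (g : ℕ) (D : Fin g → Fin n → Fin n → Prop),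
      (∀ j, ∀ u v : Fin n, D j u v → v = succ u) →
      (∀ j, ∀ v : Fin n, ¬ Relation.TransGen (D j) v v) →
      (∀ u v : Fin n, Relation.ReflTransGen (fun a b => b = succ a) u v →
        ∃ j, Relation.ReflTransGen (D j) u v) →
      n ≤ g) := by
  rcases Nat.eq_zero_or_pos n with rfl | hpos
  · exact ⟨fun _ _ _ i => i.elim0, fun _ _ _ _ _ => Nat.zero_le _⟩
  have := NeZero.of_pos hpos
  obtain rfl : succ = (· + 1) := funext fun i => Fin.ext <| by rw [hsucc, Fin.val_add_one_eq_mod]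
  exact ⟨fun D hD hacyc _ _ => Fin.eq_of_reflTransGen_add_one hD hacyc,
    fun g D hD hacyc hcover => by simpa using Fin.le_card_of_reflTransGen_cover hD hacyc hcover⟩

/-- on the directed cycle `C_n` (vertices `Fin n`, edges `i → i+1 (mod n)`,
encoded via the successor map `succ`): (i) every acyclic subgraph `D` of `C_n` satisfies
reachability `succ i ⇝_D i` for at most one index `i`; (ii) hence any family of acyclic
subgraphs of `C_n` covering all reachability pairs of `C_n` has at least `n` members. -/
theorem directed_cycle_dag_cover_lower_bound (n : ℕ) (hn : 2 ≤ n)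
    (succ : Fin n → Fin n)
    (hsucc : ∀ i : Fin n, (succ i : ℕ) = ((i : ℕ) + 1) % n) :
    (∀ D : Fin n → Fin n → Prop,
      (∀ u v : Fin n, D u v → v = succ u) →
      (∀ v : Fin n, ¬ Relation.TransGen D v v) →
      ∀ i i' : Fin n,
        Relation.ReflTransGen D (succ i) i → Relation.ReflTransGen D (succ i') i' →
        i = i') ∧
    (∀ (g : ℕ) (D : Fin g → Fin n → Fin n → Prop),
      (∀ j, ∀ u v : Fin n, D j u v → v = succ u) →
      (∀ j, ∀ v : Fin n, ¬ Relation.TransGen (D j) v v) →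
      (∀ u v : Fin n, Relation.ReflTransGen (fun a b => b = succ a) u v →
        ∃ j, Relation.ReflTransGen (D j) u v) →
      n ≤ g) :=
  directed_cycle_dag_cover_lower_bound_general n succ hsucc
end
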